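/- arXiv:1812.00492 — 2 statements merged into one kernel-verified Lean document; each statement's English description precedes it below -/
import Mathlib

section
/- Let X, U, ε be mutually independent real random variables, with U and ε symmetric about 0 having strictly positive characteristic functions. Let W = X + U and Y = β₀ + β₁X + ε for real constants β₀, β₁. Then for all t with φ_X(β₁ t) ≠ 0, the phase functions satisfy ρ_Y(t) = exp(itβ₀)·ρ_X(β₁ t) = exp(itβ₀)·ρ_W(β₁ t). -/
open MeasureTheory ProbabilityTheory Complex

/-- The characteristic function of a real random variable `X` on `(Ω, μ)`. -/
noncomputable def charFn {Ω : Type*} [MeasurableSpace Ω] (μ : Measure Ω) (X : Ω → ℝ) (t : ℝ) : ℂ :=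
  ∫ ω, Complex.exp (t * X ω * Complex.I) ∂μ

/-- The phase function of a real random variable. -/
noncomputable def phaseFn {Ω : Type*} [MeasurableSpace Ω] (μ : Measure Ω) (X : Ω → ℝ) (t : ℝ) : ℂ :=
  charFn μ X t / (‖charFn μ X t‖ : ℂ)


/-! The characteristic function of an independent sum is the product of the characteristic
functions, so adding independent noise whose characteristic function is a positive real number
leaves `φ / ‖φ‖` unchanged. The shift by `β₀` contributes the unimodular factor `exp(itβ₀)`, and
the scaling by `β₁` only rescales the argument. -/

open scoped ComplexOrder

lemma Complex.pos_of_im_eq_zero_of_re_pos {z : ℂ} (h : z.im = 0 ∧ 0 < z.re) : 0 < z :=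
  Complex.pos_iff.mpr ⟨h.2, h.1.symm⟩

lemma mul_div_norm_mul_of_pos (z : ℂ) {c : ℂ} (hc : 0 < c) : z * c / ‖z * c‖ = z / ‖z‖ := by
  rw [norm_mul, ofReal_mul, norm_of_nonneg' hc.le, mul_div_mul_right z _ hc.ne']

lemma mul_div_norm_mul_of_norm_eq_one {u : ℂ} (hu : ‖u‖ = 1) (z : ℂ) :
    u * z / ‖u * z‖ = u * (z / ‖z‖) := by
  rw [norm_mul, hu, one_mul, mul_div_assoc]

section CharFn

variable {Ω : Type*} [MeasurableSpace Ω] {μ : Measure Ω}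

lemma charFn_eq_charFun_map {X : Ω → ℝ} (hX : AEMeasurable X μ) (t : ℝ) :
    charFn μ X t = charFun (μ.map X) t := by
  rw [charFun_apply_real, integral_map hX (by fun_prop)]
  rfl

lemma ProbabilityTheory.IndepFun.charFn_add [IsFiniteMeasure μ] {X Y : Ω → ℝ}
    (hXY : IndepFun X Y μ) (hX : AEMeasurable X μ) (hY : AEMeasurable Y μ) (t : ℝ) :
    charFn μ (fun ω => X ω + Y ω) t = charFn μ X t * charFn μ Y t := by
  rw [charFn_eq_charFun_map (X := fun ω => X ω + Y ω) (hX.add hY),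
    hXY.charFun_map_fun_add_eq_mul hX hY, Pi.mul_apply,
    charFn_eq_charFun_map hX, charFn_eq_charFun_map hY]

lemma charFn_const_add (X : Ω → ℝ) (b t : ℝ) :
    charFn μ (fun ω => b + X ω) t = Complex.exp (t * b * Complex.I) * charFn μ X t := by
  simp only [charFn, ← integral_const_mul, ← Complex.exp_add]
  congr with ω
  push_cast
  ring_nf

lemma charFn_const_mul (X : Ω → ℝ) (a t : ℝ) :
    charFn μ (fun ω => a * X ω) t = charFn μ X (a * t) := by
  simp only [charFn]
  congr with ω
  push_cast
  ring_nf

lemma phaseFn_const_add (X : Ω → ℝ) (b t : ℝ) :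
    phaseFn μ (fun ω => b + X ω) t = Complex.exp (t * b * Complex.I) * phaseFn μ X t := by
  rw [phaseFn, phaseFn, charFn_const_add]
  exact mul_div_norm_mul_of_norm_eq_one (by simpa using Complex.norm_exp_ofReal_mul_I (t * b)) _

lemma phaseFn_const_mul (X : Ω → ℝ) (a t : ℝ) :
    phaseFn μ (fun ω => a * X ω) t = phaseFn μ X (a * t) := by
  rw [phaseFn, phaseFn, charFn_const_mul]

lemma ProbabilityTheory.IndepFun.phaseFn_add_of_charFn_pos [IsFiniteMeasure μ] {X Y : Ω → ℝ}
    (hXY : IndepFun X Y μ) (hX : AEMeasurable X μ) (hY : AEMeasurable Y μ) {t : ℝ}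
    (hYt : 0 < charFn μ Y t) :
    phaseFn μ (fun ω => X ω + Y ω) t = phaseFn μ X t := by
  rw [phaseFn, phaseFn, hXY.charFn_add hX hY, mul_div_norm_mul_of_pos _ hYt]

end CharFn

theorem phase_relation_linear_eiv_general {Ω : Type*} [MeasurableSpace Ω]
    (μ : Measure Ω) [IsProbabilityMeasure μ] (X U ε : Ω → ℝ) (β₀ β₁ : ℝ)
    (hX : AEMeasurable X μ) (hU : AEMeasurable U μ) (hε : AEMeasurable ε μ)
    (hindep : iIndepFun ![X, U, ε] μ)
    (hUcf : ∀ t : ℝ, (charFn μ U t).im = 0 ∧ 0 < (charFn μ U t).re)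
    (hεcf : ∀ t : ℝ, (charFn μ ε t).im = 0 ∧ 0 < (charFn μ ε t).re) :
    ∀ t : ℝ, charFn μ X (β₁ * t) ≠ 0 →
      phaseFn μ (fun ω => β₀ + β₁ * X ω + ε ω) t
          = Complex.exp (t * β₀ * Complex.I) * phaseFn μ X (β₁ * t)
        ∧ phaseFn μ (fun ω => β₀ + β₁ * X ω + ε ω) t
          = Complex.exp (t * β₀ * Complex.I) * phaseFn μ (fun ω => X ω + U ω) (β₁ * t) := by
  intro t _
  have hXU : IndepFun X U μ := by simpa using hindep.indepFun (i := 0) (j := 1) (by decide)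
  have hXε : IndepFun X ε μ := by simpa using hindep.indepFun (i := 0) (j := 2) (by decide)
  have hβ₁Xε : IndepFun (fun ω => β₁ * X ω) ε μ :=
    hXε.comp (measurable_const_mul β₁) measurable_id
  have hY : phaseFn μ (fun ω => β₀ + β₁ * X ω + ε ω) t
      = Complex.exp (t * β₀ * Complex.I) * phaseFn μ X (β₁ * t) := by
    simp_rw [add_assoc]
    rw [phaseFn_const_add, hβ₁Xε.phaseFn_add_of_charFn_pos (hX.const_mul β₁) hε
      (Complex.pos_of_im_eq_zero_of_re_pos (hεcf t)), phaseFn_const_mul]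
  refine ⟨hY, hY.trans ?_⟩
  rw [hXU.phaseFn_add_of_charFn_pos hX hU (Complex.pos_of_im_eq_zero_of_re_pos (hUcf _))]

/-- For `W = X + U` and `Y = β₀ + β₁ X + ε` with `X, U, ε` mutually independent, `U` and `ε`
symmetric about `0` with strictly positive characteristic functions, the phase functions satisfy
`ρ_Y(t) = exp(itβ₀) ρ_X(β₁ t) = exp(itβ₀) ρ_W(β₁ t)`. -/
theorem phase_relation_linear_eiv {Ω : Type*} [MeasurableSpace Ω]
    (μ : Measure Ω) [IsProbabilityMeasure μ] (X U ε : Ω → ℝ) (β₀ β₁ : ℝ)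
    (hX : AEMeasurable X μ) (hU : AEMeasurable U μ) (hε : AEMeasurable ε μ)
    (hindep : iIndepFun ![X, U, ε] μ)
    (hUsymm : Measure.map U μ = Measure.map (fun ω => -U ω) μ)
    (hεsymm : Measure.map ε μ = Measure.map (fun ω => -ε ω) μ)
    (hUcf : ∀ t : ℝ, (charFn μ U t).im = 0 ∧ 0 < (charFn μ U t).re)
    (hεcf : ∀ t : ℝ, (charFn μ ε t).im = 0 ∧ 0 < (charFn μ ε t).re) :
    ∀ t : ℝ, charFn μ X (β₁ * t) ≠ 0 →
      phaseFn μ (fun ω => β₀ + β₁ * X ω + ε ω) t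
          = Complex.exp (t * β₀ * Complex.I) * phaseFn μ X (β₁ * t)
        ∧ phaseFn μ (fun ω => β₀ + β₁ * X ω + ε ω) t
          = Complex.exp (t * β₀ * Complex.I) * phaseFn μ (fun ω => X ω + U ω) (β₁ * t) :=
  phase_relation_linear_eiv_general μ X U ε β₀ β₁ hX hU hε hindep hUcf hεcf
end

section
/- Let W = X + U and Y = β₀ + β₁X + ε with X, U, ε mutually independent and integrable to third order, with U and ε symmetric about 0 (so all their odd moments up to order 3 vanish). Then the third cumulants satisfy κ₃^Y = β₁³ κ₃^W, where κ₃ denotes the third central moment. -/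
/-!
The third cumulant is additive over independent summands: after centring both summands, the
cross terms `E[X² Z]` and `E[X Z²]` of `E[(X + Z)³]` factor by independence and vanish. It scales
by `b³` under `Z ↦ a + b Z` and vanishes for a variable symmetric about `0`, whose odd moments
are zero. Hence `κ₃(Y) = β₁³ κ₃(X) + κ₃(ε) = β₁³ κ₃(X)` and `κ₃(W) = κ₃(X) + κ₃(U) = κ₃(X)`.
-/

open MeasureTheory ProbabilityTheory

/-- The third central moment (third cumulant) of a real random variable. -/
noncomputable def thirdCumulant {Ω : Type*} [MeasurableSpace Ω] (μ : Measure Ω) (Z : Ω → ℝ) : ℝ :=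
  ∫ ω, (Z ω - ∫ ω', Z ω' ∂μ) ^ 3 ∂μ

section

variable {Ω : Type*} [MeasurableSpace Ω] {μ : Measure Ω}

theorem MeasureTheory.MemLp.integrable_pow [IsFiniteMeasure μ] {Z : Ω → ℝ} {p k : ℕ}
    (hZ : MemLp Z p μ) (hk : k ≤ p) : Integrable (fun ω => Z ω ^ k) μ := by
  have hZk : MemLp Z k μ := hZ.mono_exponent (by exact_mod_cast hk)
  refine hZk.integrable_norm_pow'.mono' ?_ (ae_of_all _ fun ω => ?_)
  · exact (hZ.aestronglyMeasurable.aemeasurable.pow_const k).aestronglyMeasurable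
  · simp [norm_pow]

theorem integral_comp_eq_zero_of_map_neg_eq {Z : Ω → ℝ} {g : ℝ → ℝ} (hZ : AEMeasurable Z μ)
    (hsymm : μ.map Z = μ.map (fun ω => -Z ω)) (hg_odd : ∀ x, g (-x) = -g x)
    (hg : AEStronglyMeasurable g (μ.map Z)) :
    ∫ ω, g (Z ω) ∂μ = 0 := by
  have h : ∫ ω, g (Z ω) ∂μ = -∫ ω, g (Z ω) ∂μ :=
    calc ∫ ω, g (Z ω) ∂μ = ∫ x, g x ∂(μ.map Z) := (integral_map hZ hg).symm
      _ = ∫ x, g x ∂(μ.map fun ω => -Z ω) := by rw [hsymm]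
      _ = ∫ ω, g (-Z ω) ∂μ := integral_map hZ.neg (hsymm ▸ hg)
      _ = -∫ ω, g (Z ω) ∂μ := by simp only [hg_odd, integral_neg]
  exact self_eq_neg.mp h

theorem thirdCumulant_eq_zero_of_map_neg_eq {Z : Ω → ℝ} (hZ : AEMeasurable Z μ)
    (hsymm : μ.map Z = μ.map (fun ω => -Z ω)) :
    thirdCumulant μ Z = 0 := by
  have hmean : ∫ ω, Z ω ∂μ = 0 :=
    integral_comp_eq_zero_of_map_neg_eq (g := id) hZ hsymm (fun _ => rfl)
      aestronglyMeasurable_id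
  have hcube : ∫ ω, Z ω ^ 3 ∂μ = 0 :=
    integral_comp_eq_zero_of_map_neg_eq hZ hsymm (fun x => Odd.neg_pow ⟨1, rfl⟩ x)
      (measurable_id.pow_const 3).aestronglyMeasurable
  simp only [thirdCumulant, hmean, sub_zero, hcube]

theorem integral_add_pow_three_of_indepFun [IsFiniteMeasure μ] {X Z : Ω → ℝ}
    (h : IndepFun X Z μ) (hX : MemLp X 3 μ) (hZ : MemLp Z 3 μ)
    (hX0 : ∫ ω, X ω ∂μ = 0) (hZ0 : ∫ ω, Z ω ∂μ = 0) :
    ∫ ω, (X ω + Z ω) ^ 3 ∂μ = ∫ ω, X ω ^ 3 ∂μ + ∫ ω, Z ω ^ 3 ∂μ := by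
  have hX1 : Integrable X μ := hX.integrable (by norm_num)
  have hZ1 : Integrable Z μ := hZ.integrable (by norm_num)
  have hX2 : Integrable (fun ω => X ω ^ 2) μ := hX.integrable_pow (by norm_num)
  have hZ2 : Integrable (fun ω => Z ω ^ 2) μ := hZ.integrable_pow (by norm_num)
  have hX3 : Integrable (fun ω => X ω ^ 3) μ := hX.integrable_pow le_rfl
  have hZ3 : Integrable (fun ω => Z ω ^ 3) μ := hZ.integrable_pow le_rfl
  have hX2Z : IndepFun (fun ω => X ω ^ 2) Z μ := h.comp (measurable_id.pow_const 2) measurable_id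
  have hXZ2 : IndepFun X (fun ω => Z ω ^ 2) μ := h.comp measurable_id (measurable_id.pow_const 2)
  have hX2Z_int : Integrable (fun ω => X ω ^ 2 * Z ω) μ := hX2Z.integrable_mul hX2 hZ1
  have hXZ2_int : Integrable (fun ω => X ω * Z ω ^ 2) μ := hXZ2.integrable_mul hX1 hZ2
  have hX2Z_zero : ∫ ω, X ω ^ 2 * Z ω ∂μ = 0 := by
    rw [hX2Z.integral_fun_mul_eq_mul_integral hX2.1 hZ1.1, hZ0, mul_zero]
  have hXZ2_zero : ∫ ω, X ω * Z ω ^ 2 ∂μ = 0 := by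
    rw [hXZ2.integral_fun_mul_eq_mul_integral hX1.1 hZ2.1, hX0, zero_mul]
  calc ∫ ω, (X ω + Z ω) ^ 3 ∂μ
      = ∫ ω, (X ω ^ 3 + 3 * (X ω ^ 2 * Z ω) + 3 * (X ω * Z ω ^ 2) + Z ω ^ 3) ∂μ := by
        congr 1 with ω; ring
    _ = ∫ ω, X ω ^ 3 ∂μ + 3 * ∫ ω, X ω ^ 2 * Z ω ∂μ + 3 * ∫ ω, X ω * Z ω ^ 2 ∂μ
          + ∫ ω, Z ω ^ 3 ∂μ := by
        rw [integral_add ((hX3.fun_add (hX2Z_int.const_mul 3)).fun_add (hXZ2_int.const_mul 3)) hZ3,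
          integral_add (hX3.fun_add (hX2Z_int.const_mul 3)) (hXZ2_int.const_mul 3),
          integral_add hX3 (hX2Z_int.const_mul 3), integral_const_mul, integral_const_mul]
    _ = ∫ ω, X ω ^ 3 ∂μ + ∫ ω, Z ω ^ 3 ∂μ := by rw [hX2Z_zero, hXZ2_zero]; ring

variable [IsProbabilityMeasure μ]

theorem integral_sub_integral_eq_zero {Z : Ω → ℝ} (hZ : Integrable Z μ) :
    ∫ ω, (Z ω - ∫ ω', Z ω' ∂μ) ∂μ = 0 := by
  simp only [integral_sub hZ (integrable_const _), integral_const, probReal_univ, smul_eq_mul,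
    one_mul, sub_self]

theorem thirdCumulant_add_of_indepFun {X Z : Ω → ℝ} (h : IndepFun X Z μ) (hX : MemLp X 3 μ)
    (hZ : MemLp Z 3 μ) :
    thirdCumulant μ (fun ω => X ω + Z ω) = thirdCumulant μ X + thirdCumulant μ Z := by
  have hX1 : Integrable X μ := hX.integrable (by norm_num)
  have hZ1 : Integrable Z μ := hZ.integrable (by norm_num)
  have hmean : ∫ ω, (X ω + Z ω) ∂μ = ∫ ω, X ω ∂μ + ∫ ω, Z ω ∂μ := integral_add hX1 hZ1
  have hcentred : ∫ ω, ((X ω - ∫ ω', X ω' ∂μ) + (Z ω - ∫ ω', Z ω' ∂μ)) ^ 3 ∂μ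
      = thirdCumulant μ X + thirdCumulant μ Z := integral_add_pow_three_of_indepFun
    (h.comp (measurable_id.sub_const (∫ ω, X ω ∂μ)) (measurable_id.sub_const (∫ ω, Z ω ∂μ)))
    (hX.sub (memLp_const _)) (hZ.sub (memLp_const _))
    (integral_sub_integral_eq_zero hX1) (integral_sub_integral_eq_zero hZ1)
  rw [thirdCumulant, hmean, ← hcentred]
  congr 1 with ω
  ring

theorem thirdCumulant_const_add_mul {Z : Ω → ℝ} (hZ : Integrable Z μ) (a b : ℝ) :
    thirdCumulant μ (fun ω => a + b * Z ω) = b ^ 3 * thirdCumulant μ Z := by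
  have hmean : ∫ ω, (a + b * Z ω) ∂μ = a + b * ∫ ω, Z ω ∂μ := by
    simp only [integral_add (integrable_const a) (hZ.const_mul b), integral_const, probReal_univ,
      smul_eq_mul, one_mul, integral_const_mul]
  rw [thirdCumulant, thirdCumulant, hmean, ← integral_const_mul (b ^ 3)]
  congr 1 with ω
  ring

end

/-- For `W = X + U`, `Y = β₀ + β₁X + ε` with mutually independent `X, U, ε` having finite
third moments, and `U, ε` symmetric about `0`, the third cumulants satisfy
`κ₃^Y = β₁³ κ₃^W`. -/
theorem third_cumulant_relation {Ω : Type*} [MeasurableSpace Ω]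
    (μ : Measure Ω) [IsProbabilityMeasure μ] (X U ε : Ω → ℝ) (β₀ β₁ : ℝ)
    (hX3 : MemLp X 3 μ) (hU3 : MemLp U 3 μ) (hε3 : MemLp ε 3 μ)
    (hindep : iIndepFun ![X, U, ε] μ)
    (hUsymm : Measure.map U μ = Measure.map (fun ω => -U ω) μ)
    (hεsymm : Measure.map ε μ = Measure.map (fun ω => -ε ω) μ) :
    thirdCumulant μ (fun ω => β₀ + β₁ * X ω + ε ω)
      = β₁ ^ 3 * thirdCumulant μ (fun ω => X ω + U ω) := by
  have hXU : IndepFun X U μ := by simpa using hindep.indepFun (i := 0) (j := 1) (by decide)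
  have hXε : IndepFun X ε μ := by simpa using hindep.indepFun (i := 0) (j := 2) (by decide)
  have hY : thirdCumulant μ (fun ω => β₀ + β₁ * X ω + ε ω)
      = thirdCumulant μ (fun ω => β₀ + β₁ * X ω) + thirdCumulant μ ε :=
    thirdCumulant_add_of_indepFun
      (hXε.comp ((measurable_id.const_mul β₁).const_add β₀) measurable_id)
      ((memLp_const β₀).add (hX3.const_mul β₁)) hε3
  rw [hY, thirdCumulant_add_of_indepFun hXU hX3 hU3,
    thirdCumulant_eq_zero_of_map_neg_eq hU3.aestronglyMeasurable.aemeasurable hUsymm,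
    thirdCumulant_eq_zero_of_map_neg_eq hε3.aestronglyMeasurable.aemeasurable hεsymm,
    thirdCumulant_const_add_mul (hX3.integrable (by norm_num)) β₀ β₁]
  ring
end
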